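/- Let d ≥ 1, λ > 0, σ > 0, 0 ≤ x ≤ L, and define T(x) = (1/(λ^(d/2) σ²)) ∫ₓᴸ z^(1-d) e^(λ z²) γ(d/2, λ z²) dz. Then T(x) ≥ ((1 + 2/d)/(2λσ²)) · ( exp(2λL²/(d+2)) − exp(2λx²/(d+2)) ). -/

import Mathlib

noncomputable def lowerGamma (a x : ℝ) : ℝ := ∫ t in (0:ℝ)..x, t ^ (a - 1) * Real.exp (-t)

noncomputable def mfet (d : ℕ) (lam σ x L : ℝ) : ℝ :=
  (1 / (lam ^ ((d : ℝ) / 2) * σ ^ 2)) *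
    ∫ z in x..L, z ^ ((1 : ℝ) - d) * Real.exp (lam * z ^ 2) * lowerGamma ((d : ℝ) / 2) (lam * z ^ 2)

/-!
With `c = a / (a + 1)`, the function `t ^ a / a * exp (-c t)` has derivative
`t ^ (a - 1) * exp (-c t) * (1 - t / (a + 1))`, which `1 - s ≤ exp (-s)` bounds by the
integrand `t ^ (a - 1) * exp (-t)` of `γ(a, ·)`; hence `γ(a, y) ≥ y ^ a / a * exp (-c y)`.
For `a = d / 2` and `y = λ z²` this bounds the integrand of `T` below by
`(2 / d) λ^(d/2) z exp (2 λ z² / (d + 2))`, whose integral is elementary. The cruder bound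
`γ(a, y) ≤ y ^ a / a` shows that the integrand of `T` is integrable near `z = 0`, where
`z ^ (1 - d)` blows up.
-/

open MeasureTheory intervalIntegral Set Real

lemma intervalIntegrable_rpow_mul {r : ℝ} (hr : -1 < r) {f : ℝ → ℝ} (hf : Continuous f)
    (p q : ℝ) : IntervalIntegrable (fun t => t ^ r * f t) volume p q :=
  (intervalIntegrable_rpow' hr).mul_continuousOn hf.continuousOn

section LowerGamma

variable {a : ℝ} (ha : 0 < a)
include ha

lemma continuous_lowerGamma : Continuous (lowerGamma a) :=
  continuous_primitive (intervalIntegrable_rpow_mul (by linarith) (by fun_prop)) 0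

lemma lowerGamma_le_rpow_div {y : ℝ} (hy : 0 ≤ y) : lowerGamma a y ≤ y ^ a / a := by
  calc lowerGamma a y ≤ ∫ t in (0:ℝ)..y, t ^ (a - 1) := by
        refine integral_mono_on hy (intervalIntegrable_rpow_mul (by linarith) (by fun_prop) 0 y)
          (intervalIntegrable_rpow' (by linarith)) fun t ht => ?_
        exact mul_le_of_le_one_right (rpow_nonneg ht.1 _) (exp_le_one_iff.mpr (by linarith [ht.1]))
    _ = y ^ a / a := by
        rw [integral_rpow (Or.inl (by linarith)), sub_add_cancel, zero_rpow ha.ne', sub_zero]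

lemma rpow_div_mul_exp_le_lowerGamma {y : ℝ} (hy : 0 ≤ y) :
    y ^ a / a * exp (-(a / (a + 1)) * y) ≤ lowerGamma a y := by
  set g : ℝ → ℝ := fun t => t ^ (a - 1) * (exp (-(a / (a + 1)) * t) * (1 - t / (a + 1)))
  have hderiv : ∀ t ∈ Ioo 0 y,
      HasDerivAt (fun t => t ^ a / a * exp (-(a / (a + 1)) * t)) (g t) t := fun t ht => by
    have hpow := (hasDerivAt_rpow_const (p := a) (Or.inl ht.1.ne')).div_const a
    have hexp := ((hasDerivAt_id t).const_mul (-(a / (a + 1)))).exp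
    refine (hpow.mul hexp).congr_deriv ?_
    have ht0 := ht.1.ne'
    simp only [g, id, rpow_sub_one ht0]
    field_simp
    ring
  have hg_le : ∀ t ∈ Icc 0 y, g t ≤ t ^ (a - 1) * exp (-t) := fun t ht => by
    refine mul_le_mul_of_nonneg_left ?_ (rpow_nonneg ht.1 _)
    calc exp (-(a / (a + 1)) * t) * (1 - t / (a + 1))
        ≤ exp (-(a / (a + 1)) * t) * exp (-(t / (a + 1))) :=
          mul_le_mul_of_nonneg_left (one_sub_le_exp_neg _) (exp_pos _).le
      _ = exp (-t) := by
          rw [← exp_add]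
          congr 1
          field_simp
          ring
  have hg_int : IntervalIntegrable g volume 0 y :=
    intervalIntegrable_rpow_mul (by linarith) (by fun_prop) 0 y
  have hcont : Continuous fun t => t ^ a / a * exp (-(a / (a + 1)) * t) :=
    ((continuous_rpow_const ha.le).div_const a).mul (by fun_prop)
  calc y ^ a / a * exp (-(a / (a + 1)) * y)
      = y ^ a / a * exp (-(a / (a + 1)) * y) - 0 ^ a / a * exp (-(a / (a + 1)) * 0) := by
        simp [zero_rpow ha.ne']
    _ = ∫ t in (0:ℝ)..y, g t :=
        (integral_eq_sub_of_hasDeriv_right_of_le hy hcont.continuousOn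
          (fun t ht => (hderiv t ht).hasDerivWithinAt) hg_int).symm
    _ ≤ lowerGamma a y :=
        integral_mono_on hy hg_int (intervalIntegrable_rpow_mul (by linarith) (by fun_prop) 0 y)
          hg_le

end LowerGamma

noncomputable def mfetIntegrand (d lam z : ℝ) : ℝ :=
  z ^ (1 - d) * exp (lam * z ^ 2) * lowerGamma (d / 2) (lam * z ^ 2)

lemma mfet_eq_integral_mfetIntegrand (d : ℕ) (lam σ x L : ℝ) :
    mfet d lam σ x L =
      1 / (lam ^ ((d : ℝ) / 2) * σ ^ 2) * ∫ z in x..L, mfetIntegrand d lam z :=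
  rfl

lemma rpow_one_sub_mul_mul_sq_rpow_half (d : ℝ) {lam z : ℝ} (hlam : 0 ≤ lam) (hz : 0 < z) :
    z ^ (1 - d) * (lam * z ^ 2) ^ (d / 2) = lam ^ (d / 2) * z := by
  rw [mul_rpow hlam (by positivity), ← rpow_natCast z 2, ← rpow_mul hz.le, mul_left_comm,
    ← rpow_add hz, show 1 - d + ((2 : ℕ) : ℝ) * (d / 2) = 1 by push_cast; ring, rpow_one]

section MfetIntegrand

variable {d lam : ℝ} (hd : 0 < d) (hlam : 0 ≤ lam)
include hd hlam

lemma mfetIntegrand_le {z : ℝ} (hz : 0 < z) :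
    mfetIntegrand d lam z ≤ 2 / d * lam ^ (d / 2) * (z * exp (lam * z ^ 2)) := by
  calc mfetIntegrand d lam z
      ≤ z ^ (1 - d) * exp (lam * z ^ 2) * ((lam * z ^ 2) ^ (d / 2) / (d / 2)) :=
        mul_le_mul_of_nonneg_left (lowerGamma_le_rpow_div (by positivity) (by positivity))
          (by positivity)
    _ = 2 / d * (z ^ (1 - d) * (lam * z ^ 2) ^ (d / 2)) * exp (lam * z ^ 2) := by
        field_simp
    _ = 2 / d * lam ^ (d / 2) * (z * exp (lam * z ^ 2)) := by
        rw [rpow_one_sub_mul_mul_sq_rpow_half d hlam hz]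
        ring

lemma le_mfetIntegrand {z : ℝ} (hz : 0 ≤ z) :
    2 / d * lam ^ (d / 2) * (z * exp (2 * lam / (d + 2) * z ^ 2)) ≤ mfetIntegrand d lam z := by
  rcases hz.eq_or_lt with rfl | hz
  · simp [mfetIntegrand, lowerGamma]
  have hexp : exp (lam * z ^ 2) * exp (-(d / 2 / (d / 2 + 1)) * (lam * z ^ 2))
      = exp (2 * lam / (d + 2) * z ^ 2) := by
    rw [← exp_add]
    congr 1
    field_simp
    ring
  calc 2 / d * lam ^ (d / 2) * (z * exp (2 * lam / (d + 2) * z ^ 2))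
      = 2 / d * (z ^ (1 - d) * (lam * z ^ 2) ^ (d / 2)) *
          (exp (lam * z ^ 2) * exp (-(d / 2 / (d / 2 + 1)) * (lam * z ^ 2))) := by
        rw [rpow_one_sub_mul_mul_sq_rpow_half d hlam hz, hexp]
        ring
    _ = z ^ (1 - d) * exp (lam * z ^ 2) * ((lam * z ^ 2) ^ (d / 2) / (d / 2) *
          exp (-(d / 2 / (d / 2 + 1)) * (lam * z ^ 2))) := by
        ring
    _ ≤ mfetIntegrand d lam z :=
        mul_le_mul_of_nonneg_left
          (rpow_div_mul_exp_le_lowerGamma (by positivity) (by positivity)) (by positivity)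

lemma intervalIntegrable_mfetIntegrand {x L : ℝ} (hx : 0 ≤ x) (hL : 0 ≤ L) :
    IntervalIntegrable (mfetIntegrand d lam) volume x L := by
  have hmeas : Measurable (mfetIntegrand d lam) := by
    unfold mfetIntegrand
    have := (continuous_lowerGamma (a := d / 2) (by positivity)).measurable
    fun_prop
  refine IntervalIntegrable.mono_fun'
    (g := fun z => 2 / d * lam ^ (d / 2) * (z * exp (lam * z ^ 2)))
    ((by fun_prop : Continuous _).intervalIntegrable _ _) hmeas.aestronglyMeasurable ?_
  refine (ae_restrict_iff' measurableSet_uIoc).mpr (Filter.Eventually.of_forall fun z hz => ?_)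
  have hz : 0 < z := lt_of_le_of_lt (le_min hx hL) hz.1
  dsimp only
  rw [norm_of_nonneg ((by positivity : (0:ℝ) ≤ _).trans (le_mfetIntegrand hd hlam hz.le))]
  exact mfetIntegrand_le hd hlam hz

end MfetIntegrand

lemma integral_mul_exp_mul_sq {c : ℝ} (hc : c ≠ 0) (a b : ℝ) :
    ∫ z in a..b, z * exp (c * z ^ 2) = (exp (c * b ^ 2) - exp (c * a ^ 2)) / (2 * c) := by
  have hderiv : ∀ z ∈ uIcc a b,
      HasDerivAt (fun z => exp (c * z ^ 2) / (2 * c)) (z * exp (c * z ^ 2)) z := fun z _ => by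
    refine ((((hasDerivAt_pow 2 z).const_mul c).exp).div_const (2 * c)).congr_deriv ?_
    field_simp
    ring
  rw [integral_eq_sub_of_hasDerivAt hderiv
    ((by fun_prop : Continuous _).intervalIntegrable _ _), sub_div]

theorem mfet_lower_bound_sharp_general (d : ℕ) (hd : 1 ≤ d) (lam σ x L : ℝ) (hlam : 0 < lam)
    (hx : 0 ≤ x) (hxL : x ≤ L) :
    ((1 + 2 / (d : ℝ)) / (2 * lam * σ ^ 2)) *
        (Real.exp (2 * lam * L ^ 2 / (d + 2)) - Real.exp (2 * lam * x ^ 2 / (d + 2)))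
      ≤ mfet d lam σ x L := by
  have hd0 : (0:ℝ) < d := by exact_mod_cast hd
  set c := 2 * lam / (d + 2)
  have hc : c ≠ 0 := by positivity
  have hint : 2 / d * lam ^ ((d : ℝ) / 2) * ((exp (c * L ^ 2) - exp (c * x ^ 2)) / (2 * c))
      ≤ ∫ z in x..L, mfetIntegrand d lam z := by
    rw [← integral_mul_exp_mul_sq hc, ← intervalIntegral.integral_const_mul]
    exact integral_mono_on hxL ((by fun_prop : Continuous _).intervalIntegrable _ _)
      (intervalIntegrable_mfetIntegrand hd0 hlam.le hx (hx.trans hxL))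
      fun z hz => le_mfetIntegrand hd0 hlam.le (hx.trans hz.1)
  calc _ = 1 / (lam ^ ((d : ℝ) / 2) * σ ^ 2) *
        (2 / d * lam ^ ((d : ℝ) / 2) * ((exp (c * L ^ 2) - exp (c * x ^ 2)) / (2 * c))) := by
        simp only [c]
        field_simp
    _ ≤ mfet d lam σ x L := by
        rw [mfet_eq_integral_mfetIntegrand]
        gcongr

theorem mfet_lower_bound_sharp (d : ℕ) (hd : 1 ≤ d) (lam σ x L : ℝ) (hlam : 0 < lam)
    (hσ : 0 < σ) (hx : 0 ≤ x) (hxL : x ≤ L) :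
    ((1 + 2 / (d : ℝ)) / (2 * lam * σ ^ 2)) *
        (Real.exp (2 * lam * L ^ 2 / (d + 2)) - Real.exp (2 * lam * x ^ 2 / (d + 2)))
      ≤ mfet d lam σ x L :=
  mfet_lower_bound_sharp_general d hd lam σ x L hlam hx hxL
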